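/- For every r ≥ 0, the map Ψ_r is a bijection from the set D_n of Dyck words of semilength n to itself, for every n ≥ 0. -/

import Mathlib

attribute [local instance] Classical.propDecidable

namespace DyckBij

/-- A word over `Bool` (`true` = up-step `u`, `false` = down-step `d`) is a Dyck word:
equally many `u`'s and `d`'s, and every prefix has at least as many `u`'s as `d`'s. -/
def IsDyck (w : List Bool) : Prop :=
  w.count false = w.count true ∧
    ∀ p : List Bool, p <+: w → p.count false ≤ p.count true

/-- `Matched w i j`: the `u` at (0-indexed) position `i` of `w` is matched (as in matched
parentheses) with the `d` at position `j`, i.e. `w = A u B d C` with `B` a Dyck word,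
`|A| = i` and `j = i + |B| + 1`. -/
def Matched (w : List Bool) (i j : ℕ) : Prop :=
  ∃ A B C : List Bool, IsDyck B ∧ w = A ++ true :: (B ++ false :: C) ∧
    A.length = i ∧ j = i + B.length + 1

/-- Positions `i` and `j` form a matched pair of steps of `w`. -/
def MatchPair (w : List Bool) (i j : ℕ) : Prop :=
  Matched w i j ∨ Matched w j i

/-- The 0-indexed reading order `σ^{(r)}` on a word of length `L`: the first `2r` positions
are read in order, and the remaining positions are read in zigzag
`2r, L-1, 2r+1, L-2, …` (0-indexed). For `r = 0` this is the zigzag order `σ`. -/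
def zigR (r L p : ℕ) : ℕ :=
  if p < 2 * r then p
  else if p % 2 = 0 then p / 2 + r
  else L + r - (p + 1) / 2

/-- The bijection `Ψ_r`: the `p`-th letter of `Ψ_r(w)` is `u` iff the match of the
`σ^{(r)}_p`-th step of `w` does not occur among the previously read steps
`σ^{(r)}_0, …, σ^{(r)}_{p-1}`. -/
noncomputable def psiR (r : ℕ) (w : List Bool) : List Bool :=
  List.ofFn fun p : Fin w.length =>
    if ∃ p' : ℕ, p' < (p : ℕ) ∧
        MatchPair w (zigR r w.length p') (zigR r w.length (p : ℕ))
    then false else true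

/-- The bijection `Ψ = Ψ_0`. -/
noncomputable def psi : List Bool → List Bool := psiR 0

/-- Number of tunnels of `w` with `|A| = |C| + 2r` (midpoint at `x = n + r`),
i.e. decompositions `w = A u B d C` with `B` a Dyck word; tunnels are indexed by `|A|`. -/
noncomputable def tunEq (r : ℕ) (w : List Bool) : ℕ :=
  {i : ℕ | ∃ A B C : List Bool, IsDyck B ∧ w = A ++ true :: (B ++ false :: C) ∧
    A.length = i ∧ A.length = C.length + 2 * r}.ncard

/-- Number of tunnels of `w` with `|A| > |C| + 2r` (midpoint in `x > n + r`). -/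
noncomputable def tunGt (r : ℕ) (w : List Bool) : ℕ :=
  {i : ℕ | ∃ A B C : List Bool, IsDyck B ∧ w = A ++ true :: (B ++ false :: C) ∧
    A.length = i ∧ C.length + 2 * r < A.length}.ncard

/-- Number of tunnels of `w` with `|A| ≤ |C| + 2r` (midpoint in `x ≤ n + r`). -/
noncomputable def tunLe (r : ℕ) (w : List Bool) : ℕ :=
  {i : ℕ | ∃ A B C : List Bool, IsDyck B ∧ w = A ++ true :: (B ++ false :: C) ∧
    A.length = i ∧ A.length ≤ C.length + 2 * r}.ncard

/-- Number of centered tunnels `ct(w)`. -/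
noncomputable def ctun (w : List Bool) : ℕ := tunEq 0 w

/-- Number of right tunnels `rt(w)`. -/
noncomputable def rtun (w : List Bool) : ℕ := tunGt 0 w

/-- Number of left tunnels `lt(w)`: tunnels with `|A| < |C|`. -/
noncomputable def ltun (w : List Bool) : ℕ :=
  {i : ℕ | ∃ A B C : List Bool, IsDyck B ∧ w = A ++ true :: (B ++ false :: C) ∧
    A.length = i ∧ A.length < C.length}.ncard

/-- Number of multitunnels of `w` with `|A| = |C| + 2r` (midpoint at `x = n + r`):
decompositions `w = A B C` with `B` a nonempty Dyck word, indexed by `(|A|, |B|)`. -/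
noncomputable def mtunEq (r : ℕ) (w : List Bool) : ℕ :=
  {q : ℕ × ℕ | ∃ A B C : List Bool, IsDyck B ∧ B ≠ [] ∧ w = A ++ B ++ C ∧
    A.length = q.1 ∧ B.length = q.2 ∧ A.length = C.length + 2 * r}.ncard

/-- Number of centered multitunnels `cmt(w)`. -/
noncomputable def cmtun (w : List Bool) : ℕ := mtunEq 0 w

/-- Number of hills `h(w)`: decompositions `w = X u d Y` with `X, Y` Dyck words. -/
noncomputable def numHills (w : List Bool) : ℕ :=
  {i : ℕ | ∃ X Y : List Bool, IsDyck X ∧ IsDyck Y ∧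
    w = X ++ true :: false :: Y ∧ X.length = i}.ncard

/-- Number of hills of `w` lying in `x > 2r`, i.e. with `|X| ≥ 2r`. -/
noncomputable def numHillsAfter (r : ℕ) (w : List Bool) : ℕ :=
  {i : ℕ | ∃ X Y : List Bool, IsDyck X ∧ IsDyck Y ∧
    w = X ++ true :: false :: Y ∧ X.length = i ∧ 2 * r ≤ X.length}.ncard

/-- Number of arches (equivalently, returns) `ret(w)`: decompositions
`w = X (u B d) Y` with `X, B, Y` Dyck words. -/
noncomputable def numArches (w : List Bool) : ℕ :=
  {i : ℕ | ∃ X B Y : List Bool, IsDyck X ∧ IsDyck B ∧ IsDyck Y ∧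
    w = X ++ true :: (B ++ false :: Y) ∧ X.length = i}.ncard

/-- Number of arches of `w` lying in `x ≥ 2r`, i.e. with `|X| ≥ 2r`. -/
noncomputable def numArchesAfter (r : ℕ) (w : List Bool) : ℕ :=
  {i : ℕ | ∃ X B Y : List Bool, IsDyck X ∧ IsDyck B ∧ IsDyck Y ∧
    w = X ++ true :: (B ++ false :: Y) ∧ X.length = i ∧ 2 * r ≤ X.length}.ncard

/-- Number of odd rises `odr(w)`: `u`-steps at odd 1-indexed positions
(even 0-indexed positions). -/
noncomputable def oddRises (w : List Bool) : ℕ :=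
  {p : ℕ | p < w.length ∧ p % 2 = 0 ∧ w.getD p false = true}.ncard

/-- Number of even rises `er(w)`: `u`-steps at even 1-indexed positions
(odd 0-indexed positions). -/
noncomputable def evenRises (w : List Bool) : ℕ :=
  {p : ℕ | p < w.length ∧ p % 2 = 1 ∧ w.getD p false = true}.ncard

/-- Number of odd rises of `w` at 1-indexed positions `> 2r`. -/
noncomputable def oddRisesAfter (r : ℕ) (w : List Bool) : ℕ :=
  {p : ℕ | p < w.length ∧ p % 2 = 0 ∧ 2 * r ≤ p ∧ w.getD p false = true}.ncard

/-- Number of even rises of `w` at 1-indexed positions `> 2r`. -/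
noncomputable def evenRisesAfter (r : ℕ) (w : List Bool) : ℕ :=
  {p : ℕ | p < w.length ∧ p % 2 = 1 ∧ 2 * r ≤ p ∧ w.getD p false = true}.ncard

/-- Number of `u`-steps of `w` at 1-indexed positions `≤ 2r`. -/
noncomputable def upstepsBefore (r : ℕ) (w : List Bool) : ℕ :=
  {p : ℕ | p < w.length ∧ p < 2 * r ∧ w.getD p false = true}.ncard

/-- Number of peaks of `w`: occurrences of the factor `u d`. -/
noncomputable def numPeaks (w : List Bool) : ℕ :=
  {i : ℕ | i + 2 ≤ w.length ∧ w.getD i false = true ∧ w.getD (i + 1) true = false}.ncard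

/-- Number of occurrences in `w` of a factor of length 3 beginning with `u`
and ending with `d` (occurrences of `u⋆d`). -/
noncomputable def numUStarD (w : List Bool) : ℕ :=
  {i : ℕ | i + 3 ≤ w.length ∧ w.getD i false = true ∧ w.getD (i + 2) true = false}.ncard

/-- `ih(w)`: 1 if `w` begins with the factor `u d`, else 0. -/
noncomputable def initHill (w : List Bool) : ℕ :=
  if w.take 2 = [true, false] then 1 else 0

/-- `fh(w)`: 1 if `w = X u d` with `X` a Dyck word, else 0. -/
noncomputable def finHill (w : List Bool) : ℕ :=
  if ∃ X : List Bool, IsDyck X ∧ w = X ++ [true, false] then 1 else 0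

/-- `π` avoids the pattern 321. -/
def Avoids321 {n : ℕ} (π : Equiv.Perm (Fin n)) : Prop :=
  ¬ ∃ i j k : Fin n, i < j ∧ j < k ∧ π k < π j ∧ π j < π i

/-- `π` avoids the pattern 132. -/
def Avoids132 {n : ℕ} (π : Equiv.Perm (Fin n)) : Prop :=
  ¬ ∃ i j k : Fin n, i < j ∧ j < k ∧ π i < π k ∧ π k < π j

/-- Number of fixed points of `π`. -/
noncomputable def fixedPts {n : ℕ} (π : Equiv.Perm (Fin n)) : ℕ :=
  {i : Fin n | π i = i}.ncard

/-- Number of excedances of `π`. -/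
noncomputable def excedances {n : ℕ} (π : Equiv.Perm (Fin n)) : ℕ :=
  {i : Fin n | i < π i}.ncard

/-- Number of descents of `π`. -/
noncomputable def descents {n : ℕ} (π : Equiv.Perm (Fin n)) : ℕ :=
  {i : ℕ | ∃ (h1 : i < n) (h2 : i + 1 < n), π ⟨i + 1, h2⟩ < π ⟨i, h1⟩}.ncard

/-- `α_r(π) = #{i : π(i) = i + r}` (stated 0-indexed, equivalent to the 1-indexed version). -/
noncomputable def alphaStat {n : ℕ} (r : ℕ) (π : Equiv.Perm (Fin n)) : ℕ :=
  {i : Fin n | (π i : ℕ) = (i : ℕ) + r}.ncard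

/-- `β_r(π) = #{i : i > r, π(i) = i}` (for 1-indexed `i`; 0-indexed this is `r ≤ i`). -/
noncomputable def betaStat {n : ℕ} (r : ℕ) (π : Equiv.Perm (Fin n)) : ℕ :=
  {i : Fin n | r ≤ (i : ℕ) ∧ π i = i}.ncard

/-!
Read a Dyck word `w` through its non-crossing perfect matching: the `p`-th letter of
`Ψ_r(w)` is `d` exactly when the `p`-th position read is matched with a position read earlier.
Along `σ^{(r)}` the positions read always form `[0, a) ∪ [c, L)`, an arc of the circle `ℤ/L`,
and the next position is `a` or `c - 1`, adjacent to one of its ends. The arcs of the matching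
that leave the read region are nested, so a closing arc must end at the cyclically last
(resp. first) read position whose partner is unread: step by step the matching, hence `w`, is
recovered from `Ψ_r(w)`. In a prefix of `Ψ_r(w)` the excess of `u`'s over `d`'s is the number
of arcs leaving the read region, so `Ψ_r(w)` is again a Dyck word, and an injection of the
finite set `D_n` into itself is a bijection.
-/

open Finset

section Height

def balance (l : List Bool) : ℤ := l.count true - l.count false

def height (w : List Bool) (k : ℕ) : ℤ := balance (w.take k)

@[simp] lemma balance_nil : balance [] = 0 := by simp [balance]

lemma balance_append (l₁ l₂ : List Bool) :
    balance (l₁ ++ l₂) = balance l₁ + balance l₂ := by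
  simp only [balance, List.count_append]; push_cast; ring

lemma balance_cons (b : Bool) (l : List Bool) :
    balance (b :: l) = (if b then 1 else -1) + balance l := by
  cases b <;> simp [balance] <;> ring

lemma height_zero (w : List Bool) : height w 0 = 0 := by simp [height]

lemma height_of_length_le {w : List Bool} {k : ℕ} (hk : w.length ≤ k) :
    height w k = balance w := by
  rw [height, List.take_of_length_le hk]

lemma height_succ {w : List Bool} {k : ℕ} (hk : k < w.length) :
    height w (k + 1) = height w k + (if w[k] then 1 else -1) := by
  rw [height, height, List.take_add_one, List.getElem?_eq_getElem hk, Option.toList_some,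
    balance_append, balance_cons, balance_nil, add_zero]

lemma height_succ_eq_or {w : List Bool} {k : ℕ} (hk : k < w.length) :
    height w (k + 1) = height w k + 1 ∨ height w (k + 1) = height w k - 1 := by
  rw [height_succ hk]; split <;> simp [sub_eq_add_neg]

lemma height_append_add (l₁ l₂ : List Bool) (t : ℕ) :
    height (l₁ ++ l₂) (l₁.length + t) = balance l₁ + height l₂ t := by
  rw [height, List.take_append, List.take_of_length_le (by omega), Nat.add_sub_cancel_left,
    balance_append, height]

lemma isDyck_iff (w : List Bool) : IsDyck w ↔ balance w = 0 ∧ ∀ k, 0 ≤ height w k := by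
  have hbal : ∀ l : List Bool, 0 ≤ balance l ↔ l.count false ≤ l.count true := fun l => by
    simp [balance]
  constructor
  · rintro ⟨h₁, h₂⟩
    exact ⟨by simp [balance, h₁], fun k => (hbal _).2 (h₂ _ (List.take_prefix _ _))⟩
  · rintro ⟨h₁, h₂⟩
    refine ⟨by simp only [balance] at h₁; omega, fun p hp => ?_⟩
    rw [List.prefix_iff_eq_take] at hp
    rw [← hbal, hp]
    exact h₂ _

lemma IsDyck.height_nonneg {w : List Bool} (hw : IsDyck w) (k : ℕ) : 0 ≤ height w k :=
  ((isDyck_iff w).1 hw).2 k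

lemma IsDyck.height_length {w : List Bool} (hw : IsDyck w) : height w w.length = 0 := by
  rw [height_of_length_le le_rfl]; exact ((isDyck_iff w).1 hw).1

lemma height_decomp {w A B C : List Bool} (hw : w = A ++ true :: (B ++ false :: C)) :
    height w A.length = balance A ∧
      (∀ t ≤ B.length, height w (A.length + 1 + t) = balance A + 1 + height B t) ∧
      height w (A.length + B.length + 1 + 1) = balance A + balance B := by
  subst hw
  have hcons : ∀ t, height (A ++ true :: (B ++ false :: C)) (A.length + 1 + t) =
      balance A + 1 + height (B ++ false :: C) t := fun t => by
    rw [add_assoc, height_append_add, height, height, add_comm 1, List.take_succ_cons,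
      balance_cons]; simp only [↓reduceIte]; ring
  refine ⟨by simpa [height_zero] using height_append_add A (true :: (B ++ false :: C)) 0,
    fun t ht => ?_, ?_⟩
  · rw [hcons, height, height, List.take_append_of_le_length ht]
  · rw [show A.length + B.length + 1 + 1 = A.length + 1 + (B.length + 1) by omega, hcons,
      height_append_add, height, List.take_succ_cons, balance_cons]
    simp only [Bool.false_eq_true, ↓reduceIte, List.take_zero, balance_nil]; ring

end Height

section Matching

lemma exists_eq_append_getElem_cons {α : Type*} {w : List α} {i j : ℕ} (hij : i < j)
    (hj : j < w.length) :
    ∃ A B C : List α, w = A ++ w[i] :: (B ++ w[j] :: C) ∧ A.length = i ∧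
      j = i + B.length + 1 := by
  refine ⟨w.take i, (w.drop (i + 1)).take (j - i - 1), w.drop (j + 1), ?_,
    by simp only [List.length_take]; omega,
    by simp only [List.length_take, List.length_drop]; omega⟩
  have hmid : (w.drop (i + 1)).drop (j - i - 1) = w[j] :: w.drop (j + 1) := by
    rw [List.drop_drop, show i + 1 + (j - i - 1) = j by omega, List.drop_eq_getElem_cons hj]
  conv_lhs => rw [← List.take_append_drop i w, List.drop_eq_getElem_cons (by omega),
    ← List.take_append_drop (j - i - 1) (w.drop (i + 1)), hmid]

variable {w : List Bool} {i j k l : ℕ}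

lemma Matched.getElem?_left (h : Matched w i j) : w[i]? = some true := by
  obtain ⟨A, B, C, -, rfl, rfl, -⟩ := h
  simp

lemma Matched.getElem?_right (h : Matched w i j) : w[j]? = some false := by
  obtain ⟨A, B, C, -, rfl, rfl, rfl⟩ := h
  rw [List.getElem?_append_right (by omega), show A.length + B.length + 1 - A.length =
    B.length + 1 by omega]
  simp

lemma Matched.height_spec (h : Matched w i j) :
    i < j ∧ j < w.length ∧ height w (j + 1) = height w i ∧
      ∀ k, i < k → k ≤ j → height w i < height w k := by
  obtain ⟨A, B, C, hB, hw, rfl, rfl⟩ := h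
  obtain ⟨hA, hmid, hend⟩ := height_decomp hw
  have hBbal : balance B = 0 := ((isDyck_iff B).1 hB).1
  refine ⟨by omega, by simp only [hw, List.length_append, List.length_cons]; omega,
    by rw [hend, hA, hBbal, add_zero], fun k hik hkj => ?_⟩
  obtain ⟨t, rfl⟩ : ∃ t, k = A.length + 1 + t := ⟨k - A.length - 1, by omega⟩
  rw [hA, hmid t (by omega)]
  linarith [hB.height_nonneg t]

lemma matched_of_height (hij : i < j) (hj : j < w.length) (hi : w[i] = true)
    (hret : height w (j + 1) = height w i)
    (hpos : ∀ k, i < k → k ≤ j → height w i < height w k) : Matched w i j := by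
  have hjf : w[j] = false := by
    have := hpos j hij le_rfl
    rw [height_succ hj] at hret
    cases hb : w[j]
    · rfl
    · rw [hb, if_pos rfl] at hret; linarith
  obtain ⟨A, B, C, hw, rfl, rfl⟩ := exists_eq_append_getElem_cons hij hj
  rw [hi, hjf] at hw
  obtain ⟨hA, hmid, hend⟩ := height_decomp hw
  have hBbal : balance B = 0 := by
    rw [hend, hA] at hret
    linarith
  refine ⟨A, B, C, (isDyck_iff B).2 ⟨hBbal, fun t => ?_⟩, hw, rfl, rfl⟩
  rcases Nat.lt_or_ge B.length t with hBt | hBt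
  · rw [height_of_length_le hBt.le, hBbal]
  · rcases Nat.eq_zero_or_pos t with rfl | ht
    · exact (height_zero B).ge
    · have := hpos (A.length + 1 + t) (by omega) (by omega)
      rw [hA, hmid t hBt] at this; linarith

lemma Matched.right_unique (h₁ : Matched w i j) (h₂ : Matched w i k) : j = k := by
  obtain ⟨hij, -, hret₁, hpos₁⟩ := h₁.height_spec
  obtain ⟨hik, -, hret₂, hpos₂⟩ := h₂.height_spec
  rcases lt_trichotomy j k with hjk | rfl | hkj
  · have := hpos₂ (j + 1) (by omega) hjk; omega
  · rfl
  · have := hpos₁ (k + 1) (by omega) hkj; omega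

lemma Matched.left_unique (h₁ : Matched w j i) (h₂ : Matched w k i) : j = k := by
  obtain ⟨hji, -, hret₁, hpos₁⟩ := h₁.height_spec
  obtain ⟨hki, -, hret₂, hpos₂⟩ := h₂.height_spec
  rcases lt_trichotomy j k with hjk | rfl | hkj
  · have := hpos₁ k hjk hki.le; omega
  · rfl
  · have := hpos₂ j hkj hji.le; omega

lemma Matched.not_matched_right (h₁ : Matched w i j) : ¬ Matched w k i := fun h₂ => by
  simpa using h₁.getElem?_left.symm.trans h₂.getElem?_right

lemma Matched.le_of_nested (h₁ : Matched w i j) (h₂ : Matched w k l) (hik : i < k)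
    (hkj : k ≤ j) : l ≤ j := by
  obtain ⟨-, -, hret, hpos₁⟩ := h₁.height_spec
  obtain ⟨-, -, -, hpos₂⟩ := h₂.height_spec
  by_contra! hjl
  have := hpos₁ k hik hkj
  have := hpos₂ (j + 1) (by omega) (by omega)
  omega

lemma MatchPair.symm (h : MatchPair w i j) : MatchPair w j i := Or.symm h

lemma MatchPair.unique (h₁ : MatchPair w i j) (h₂ : MatchPair w i k) : j = k := by
  rcases h₁ with h₁ | h₁ <;> rcases h₂ with h₂ | h₂
  · exact h₁.right_unique h₂
  · exact (h₁.not_matched_right h₂).elim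
  · exact (h₂.not_matched_right h₁).elim
  · exact h₁.left_unique h₂

end Matching

section Walk

variable {h : ℕ → ℤ} {i m : ℕ}

lemma exists_first_return (hstep : ∀ k < m, h (k + 1) = h k + 1 ∨ h (k + 1) = h k - 1)
    (hup : h (i + 1) = h i + 1) (him : i < m) (hm : h m ≤ h i) :
    ∃ j, i < j ∧ j < m ∧ h (j + 1) = h i ∧ ∀ k, i < k → k ≤ j → h i < h k := by
  have hex : ∃ t, i < t ∧ h t ≤ h i := ⟨m, him, hm⟩
  obtain ⟨hit, hret⟩ := Nat.find_spec hex
  have hle : Nat.find hex ≤ m := Nat.find_min' hex ⟨him, hm⟩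
  have hpos : ∀ k, i < k → k < Nat.find hex → h i < h k := fun k hik hk => by
    have := Nat.find_min hex hk
    push Not at this
    exact this hik
  have hne : Nat.find hex ≠ i + 1 := fun he => by rw [he] at hret; omega
  obtain ⟨j, hj⟩ : ∃ j, Nat.find hex = j + 1 := ⟨Nat.find hex - 1, by omega⟩
  rw [hj] at hit hret hle hpos
  have := hpos j (by omega) (by omega)
  refine ⟨j, by omega, by omega, ?_, fun k hik hkj => hpos k hik (by omega)⟩
  rcases hstep j (by omega) with h' | h' <;> omega

lemma exists_last_rise (hstep : ∀ k ≤ i, h (k + 1) = h k + 1 ∨ h (k + 1) = h k - 1)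
    (hdown : h (i + 1) = h i - 1) (h0 : h 0 ≤ h (i + 1)) :
    ∃ t, t < i ∧ h (t + 1) = h t + 1 ∧ h t = h (i + 1) ∧
      ∀ k, t < k → k ≤ i → h t < h k := by
  set t := Nat.findGreatest (fun t => h t ≤ h (i + 1)) i
  have hspec : h t ≤ h (i + 1) :=
    Nat.findGreatest_spec (P := fun t => h t ≤ h (i + 1)) (Nat.zero_le i) h0
  have hgt : ∀ k, t < k → k ≤ i → h (i + 1) < h k := fun k hk hki =>
    not_le.1 (Nat.findGreatest_is_greatest hk hki)
  have hti : t < i := (Nat.findGreatest_le i).lt_of_ne fun he : t = i => by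
    rw [he] at hspec; omega
  have := hgt (t + 1) (by omega) hti
  have hrise : h (t + 1) = h t + 1 := by rcases hstep t hti.le with h' | h' <;> omega
  have heq : h t = h (i + 1) := by omega
  exact ⟨t, hti, hrise, heq, fun k hk hki => heq ▸ hgt k hk hki⟩

end Walk

section Partner

variable {w : List Bool} {i j k : ℕ}

lemma exists_matchPair (hw : IsDyck w) (hi : i < w.length) : ∃ j, MatchPair w i j := by
  have hstep : ∀ k < w.length, height w (k + 1) = height w k + 1 ∨
      height w (k + 1) = height w k - 1 := fun k hk => height_succ_eq_or hk
  have hsucc := height_succ hi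
  cases hb : w[i]
  · rw [hb, if_neg Bool.false_ne_true] at hsucc
    obtain ⟨t, hti, hrise, heq, hpos⟩ := exists_last_rise (i := i)
      (fun k hk => hstep k (by omega)) (by rw [hsucc]; ring)
      (by rw [height_zero]; exact hw.height_nonneg _)
    have htrue : w[t] = true := by
      rw [height_succ (by omega)] at hrise
      by_contra hbt
      rw [if_neg hbt] at hrise
      omega
    exact ⟨t, Or.inr (matched_of_height hti hi htrue heq.symm hpos)⟩
  · rw [hb, if_pos rfl] at hsucc
    obtain ⟨j, hij, hjL, hret, hpos⟩ := exists_first_return hstep hsucc hi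
      (by rw [hw.height_length]; exact hw.height_nonneg _)
    exact ⟨j, Or.inl (matched_of_height hij hjL hb hret hpos)⟩

lemma MatchPair.lt_length (h : MatchPair w i j) : i < w.length := by
  rcases h with h | h <;> have := h.height_spec <;> omega

lemma MatchPair.matched_of_lt (h : MatchPair w i j) (hij : i < j) : Matched w i j :=
  h.resolve_right fun h' => by have := h'.height_spec; omega

lemma MatchPair.matched_of_gt (h : MatchPair w i j) (hji : j < i) : Matched w j i :=
  h.resolve_left fun h' => by have := h'.height_spec; omega

noncomputable def partner (w : List Bool) (i : ℕ) : ℕ :=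
  if h : ∃ j, MatchPair w i j then h.choose else i

lemma partner_eq_of_matchPair (h : MatchPair w i j) : partner w i = j := by
  have hex : ∃ j, MatchPair w i j := ⟨j, h⟩
  rw [partner, dif_pos hex]
  exact hex.choose_spec.unique h

lemma matchPair_partner (hw : IsDyck w) (hi : i < w.length) : MatchPair w i (partner w i) := by
  obtain ⟨j, hj⟩ := exists_matchPair hw hi
  rwa [partner_eq_of_matchPair hj]

lemma partner_of_length_le (hi : w.length ≤ i) : partner w i = i := by
  rw [partner, dif_neg]
  rintro ⟨j, hj⟩
  have := hj.lt_length
  omega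

lemma partner_lt_length (hw : IsDyck w) (hi : i < w.length) : partner w i < w.length :=
  (matchPair_partner hw hi).symm.lt_length

lemma partner_ne_self (hw : IsDyck w) (hi : i < w.length) : partner w i ≠ i := by
  intro he
  have h := matchPair_partner hw hi
  rw [he] at h
  rcases h with h | h <;> have := h.height_spec <;> omega

lemma partner_involutive (hw : IsDyck w) : Function.Involutive (partner w) := fun i => by
  rcases lt_or_ge i w.length with hi | hi
  · exact partner_eq_of_matchPair (matchPair_partner hw hi).symm
  · rw [partner_of_length_le hi, partner_of_length_le hi]

lemma getElem?_eq_some_decide_lt_partner (hw : IsDyck w) (hi : i < w.length) :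
    w[i]? = some (decide (i < partner w i)) := by
  have h := matchPair_partner hw hi
  rcases lt_or_gt_of_ne (partner_ne_self hw hi).symm with hlt | hgt
  · rw [(h.matched_of_lt hlt).getElem?_left, decide_eq_true hlt]
  · rw [(h.matched_of_gt hgt).getElem?_right, decide_eq_false (by omega)]

lemma partner_noncrossing (hw : IsDyck w) :
    ¬ (i < k ∧ k < partner w i ∧ partner w i < partner w k) := by
  rintro ⟨hik, hki, hik'⟩
  have hi : i < w.length := by
    by_contra! hi
    rw [partner_of_length_le hi] at hki
    omega
  have hk : k < w.length := hki.trans (partner_lt_length hw hi)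
  have h₁ := (matchPair_partner hw hi).matched_of_lt (by omega)
  have h₂ := (matchPair_partner hw hk).matched_of_lt (by omega)
  have := h₁.le_of_nested h₂ hik hki.le
  omega

end Partner

section ReadingOrder

variable {r L p : ℕ}

/-- The first `p` steps of `σ^{(r)}` read `[0, readLeft r p) ∪ [readRight r L p, L)`. -/
def readLeft (r p : ℕ) : ℕ := if p ≤ 2 * r then p else 2 * r + (p - 2 * r + 1) / 2

def readRight (r L p : ℕ) : ℕ := L - (p - 2 * r) / 2

def readSet (r L p : ℕ) : Finset ℕ := (Finset.range p).image (zigR r L)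

lemma readRight_le : readRight r L p ≤ L := Nat.sub_le _ _

lemma readLeft_add_readRight (hp : p ≤ L) : readLeft r p + (L - readRight r L p) = p := by
  unfold readLeft readRight; split_ifs <;> omega

lemma readLeft_lt_readRight (hp : p < L) : readLeft r p < readRight r L p := by
  unfold readLeft readRight; split_ifs <;> omega

lemma zigR_eq_readLeft_or_readRight (hp : p < L) :
    (zigR r L p = readLeft r p ∧ readLeft r (p + 1) = readLeft r p + 1 ∧
        readRight r L (p + 1) = readRight r L p) ∨
      (zigR r L p + 1 = readRight r L p ∧ readLeft r (p + 1) = readLeft r p ∧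
        readRight r L (p + 1) + 1 = readRight r L p) := by
  unfold zigR readLeft readRight; split_ifs <;> omega

lemma zigR_lt (hp : p < L) : zigR r L p < L := by
  have := readLeft_lt_readRight (r := r) hp
  have := readRight_le (r := r) (L := L) (p := p)
  rcases zigR_eq_readLeft_or_readRight (r := r) hp with h | h <;> omega

lemma readSet_succ : readSet r L (p + 1) = insert (zigR r L p) (readSet r L p) := by
  rw [readSet, Finset.range_add_one, Finset.image_insert, readSet]

lemma mem_readSet {x : ℕ} (hp : p ≤ L) :
    x ∈ readSet r L p ↔ x < readLeft r p ∨ readRight r L p ≤ x ∧ x < L := by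
  induction p with
  | zero => simp [readSet, readLeft, readRight]
  | succ p ih =>
    rw [readSet_succ, Finset.mem_insert, ih (by omega)]
    have := readLeft_lt_readRight (r := r) (show p < L by omega)
    have := readRight_le (r := r) (L := L) (p := p)
    rcases zigR_eq_readLeft_or_readRight (r := r) (show p < L by omega) with h | h <;> omega

lemma zigR_notMem_readSet (hp : p < L) : zigR r L p ∉ readSet r L p := by
  rw [mem_readSet hp.le]
  have := readLeft_lt_readRight (r := r) hp
  rcases zigR_eq_readLeft_or_readRight (r := r) hp with h | h <;> omega

lemma readSet_self : readSet r L L = Finset.range L := by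
  ext x
  rw [mem_readSet le_rfl, Finset.mem_range]
  have := readLeft_add_readRight (r := r) (le_refl L)
  omega

end ReadingOrder

section Unmatched

variable {α : Type*} [DecidableEq α] {f : α → α} {S : Finset α} {x : α}

def unmatched (f : α → α) (S : Finset α) : Finset α := S.filter (f · ∉ S)

@[simp] lemma mem_unmatched : x ∈ unmatched f S ↔ x ∈ S ∧ f x ∉ S :=
  Finset.mem_filter

lemma card_unmatched_insert_of_mem (hf : Function.Involutive f) (hx : x ∉ S) (hfx : f x ∈ S) :
    #(unmatched f (insert x S)) + 1 = #(unmatched f S) := by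
  have heq : unmatched f (insert x S) = (unmatched f S).erase (f x) := by
    ext y
    simp only [unmatched, Finset.mem_filter, Finset.mem_insert, Finset.mem_erase, not_or]
    constructor
    · rintro ⟨rfl | hy, hne, hfy⟩
      · exact absurd hfx hfy
      · exact ⟨fun h => hne (by rw [h, hf]), hy, hfy⟩
    · rintro ⟨hne, hy, hfy⟩
      exact ⟨Or.inr hy, fun h => hne (by rw [← h, hf]), hfy⟩
  have hmem : f x ∈ unmatched f S := by
    simpa [unmatched, hf x] using ⟨hfx, hx⟩
  rw [heq, Finset.card_erase_add_one hmem]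

lemma card_unmatched_insert_of_notMem (hf : Function.Involutive f) (hx : x ∉ S) (hfx : f x ∉ S)
    (hne : f x ≠ x) :
    #(unmatched f (insert x S)) = #(unmatched f S) + 1 := by
  have heq : unmatched f (insert x S) = insert x (unmatched f S) := by
    ext y
    simp only [unmatched, Finset.mem_filter, Finset.mem_insert, not_or]
    constructor
    · rintro ⟨rfl | hy, -, hfy⟩
      · exact Or.inl rfl
      · exact Or.inr ⟨hy, hfy⟩
    · rintro (rfl | ⟨hy, hfy⟩)
      · exact ⟨Or.inl rfl, hne, hfx⟩
      · exact ⟨Or.inr hy, fun h => hfx (by rwa [← h, hf]), hfy⟩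
  rw [heq, Finset.card_insert_of_notMem (by simp [unmatched, hx])]

end Unmatched

section Agreement

variable {α : Type*} [DecidableEq α] {f g : α → α} {S : Finset α} {x : α}

def MatchingAgreeOn (f g : α → α) (S : Finset α) : Prop :=
  ∀ x ∈ S, ∀ y ∈ S, f x = y ↔ g x = y

lemma MatchingAgreeOn.unmatched_eq (h : MatchingAgreeOn f g S) :
    unmatched f S = unmatched g S := by
  ext x
  simp only [mem_unmatched, and_congr_right_iff, not_iff_not]
  intro hx
  exact ⟨fun hf => (h x hx _ hf).1 rfl ▸ hf, fun hg => ((h x hx _ hg).2 rfl).symm ▸ hg⟩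

lemma MatchingAgreeOn.insert (hf : Function.Involutive f) (hg : Function.Involutive g)
    (h : MatchingAgreeOn f g S) (hx : ∀ y ∈ S, f x = y ↔ g x = y) (hfx : f x ≠ x)
    (hgx : g x ≠ x) : MatchingAgreeOn f g (insert x S) := by
  have hflip : ∀ {u : α → α}, Function.Involutive u → ∀ y, u y = x ↔ u x = y :=
    fun hu y => ⟨fun h => h ▸ hu y, fun h => h ▸ hu x⟩
  simp only [MatchingAgreeOn, Finset.mem_insert]
  rintro y (rfl | hy) z (rfl | hz)
  · exact iff_of_false hfx hgx
  · exact hx z hz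
  · rw [hflip hf, hflip hg]; exact hx y hy
  · exact h y hy z hz

end Agreement

section Preservation

variable {r : ℕ} {w : List Bool}

@[simp] lemma length_psiR (r : ℕ) (w : List Bool) : (psiR r w).length = w.length := by
  simp [psiR]

lemma psiR_eq_map (hw : IsDyck w) :
    psiR r w = (List.range w.length).map
      fun p => decide (partner w (zigR r w.length p) ∉ readSet r w.length p) := by
  apply List.ext_getElem (by simp)
  intro p hp _
  have hiff : (∃ p' < p, MatchPair w (zigR r w.length p') (zigR r w.length p)) ↔
      partner w (zigR r w.length p) ∈ readSet r w.length p := by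
    simp only [readSet, Finset.mem_image, Finset.mem_range]
    constructor
    · rintro ⟨p', hp', hm⟩
      exact ⟨p', hp', (partner_eq_of_matchPair hm.symm).symm⟩
    · rintro ⟨p', hp', hz⟩
      refine ⟨p', hp', hz ▸ (matchPair_partner hw (zigR_lt ?_)).symm⟩
      simpa using hp
  simp only [psiR, List.getElem_ofFn, List.getElem_map, List.getElem_range]
  split_ifs with h <;> simp_all

lemma count_take_psiR (hw : IsDyck w) {p : ℕ} (hp : p ≤ w.length) :
    ((psiR r w).take p).count true =
      ((psiR r w).take p).count false + #(unmatched (partner w) (readSet r w.length p)) := by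
  rw [psiR_eq_map hw, ← List.map_take, List.take_range, min_eq_left hp]
  induction p with
  | zero => simp [readSet, unmatched]
  | succ p ih =>
    have hpL : p < w.length := by omega
    rw [List.range_succ, List.map_append, List.map_singleton, List.count_append,
      List.count_append, List.count_singleton, List.count_singleton, ih hpL.le, readSet_succ]
    have hx := zigR_notMem_readSet (r := r) hpL
    by_cases hmem : partner w (zigR r w.length p) ∈ readSet r w.length p
    · have := card_unmatched_insert_of_mem (partner_involutive hw) hx hmem
      simp only [hmem, not_true_eq_false, decide_false, BEq.rfl, beq_true, Bool.false_eq_true,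
        ↓reduceIte]
      omega
    · have := card_unmatched_insert_of_notMem (partner_involutive hw) hx hmem
        (partner_ne_self hw (zigR_lt hpL))
      simp only [hmem, not_false_eq_true, decide_true, BEq.rfl, beq_false, Bool.not_true,
        Bool.false_eq_true, ↓reduceIte]
      omega

lemma psiR_isDyck (hw : IsDyck w) : IsDyck (psiR r w) := by
  have hlen := length_psiR r w
  refine ⟨?_, fun q hq => ?_⟩
  · have hempty : unmatched (partner w) (readSet r w.length w.length) = ∅ := by
      rw [readSet_self, unmatched, Finset.filter_eq_empty_iff]
      intro x hx
      simpa using partner_lt_length hw (Finset.mem_range.1 hx)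
    have := count_take_psiR (r := r) hw le_rfl
    rw [hempty, ← hlen, List.take_length] at this
    simpa using this.symm
  · have hq' := List.prefix_iff_eq_take.1 hq
    have := count_take_psiR (r := r) hw (hq.length_le.trans hlen.le)
    rw [← hq'] at this
    omega

end Preservation

section ForcedPartner

variable {w : List Bool} {a b c z : ℕ}

/-- Rank of a position when `0, …, L - 1` is traversed cyclically starting from `c`; on a read
set `[0, a) ∪ [c, L)` it orders `[c, L)` before `[0, a)`. -/
def cyclicRank (c L x : ℕ) : ℕ := if x < c then x + L else x

lemma cyclicRank_injOn (c L : ℕ) : Set.InjOn (cyclicRank c L) (Set.Iio L) :=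
  fun x hx y hy h => by
    simp only [Set.mem_Iio] at hx hy
    unfold cyclicRank at h; split_ifs at h <;> omega

/-- When position `a` closes an arc, its partner is the cyclically last unmatched read position. -/
lemma cyclicRank_le_partner_left (hw : IsDyck w) (hac : a < c) (hc : c ≤ w.length)
    (hz : z < a ∨ c ≤ z ∧ z < w.length)
    (hpz : a ≤ partner w z ∧ partner w z < c) :
    cyclicRank c w.length z ≤ cyclicRank c w.length (partner w a) := by
  have hinv : ∀ x, partner w (partner w x) = x := partner_involutive hw
  have hpaL := partner_lt_length hw (show a < w.length by omega)
  by_cases hz₀ : z = partner w a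
  · rw [hz₀]
  have hpz' : partner w z ≠ a := fun h => hz₀ (by rw [← h, hinv])
  have h₁ := partner_noncrossing hw (i := partner w a) (k := z)
  have h₂ := partner_noncrossing hw (i := z) (k := a)
  have h₃ := partner_noncrossing hw (i := a) (k := partner w z)
  simp only [hinv] at h₁ h₃
  unfold cyclicRank; split_ifs <;> omega

/-- When position `b` closes an arc, its partner is the cyclically first unmatched read
position. -/
lemma cyclicRank_partner_right_le (hw : IsDyck w) (hab : a ≤ b) (hb : b < w.length)
    (hpb : partner w b < a ∨ b < partner w b) (hz : z < a ∨ b < z ∧ z < w.length)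
    (hpz : a ≤ partner w z ∧ partner w z ≤ b) :
    cyclicRank (b + 1) w.length (partner w b) ≤ cyclicRank (b + 1) w.length z := by
  have hinv : ∀ x, partner w (partner w x) = x := partner_involutive hw
  have hpbL := partner_lt_length hw hb
  by_cases hz₀ : z = partner w b
  · rw [hz₀]
  have hpz' : partner w z ≠ b := fun h => hz₀ (by rw [← h, hinv])
  have h₁ := partner_noncrossing hw (i := partner w z) (k := b)
  have h₂ := partner_noncrossing hw (i := partner w b) (k := partner w z)
  have h₃ := partner_noncrossing hw (i := z) (k := partner w b)
  simp only [hinv] at h₁ h₂ h₃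
  unfold cyclicRank; split_ifs <;> omega

end ForcedPartner

section Injectivity

variable {r : ℕ} {w₁ w₂ : List Bool}

lemma partner_eq_of_unmatched_eq (hw₁ : IsDyck w₁) (hw₂ : IsDyck w₂)
    (hlen : w₁.length = w₂.length) {S : Finset ℕ} {a c x : ℕ} (hac : a < c)
    (hc : c ≤ w₁.length) (hS : ∀ y, y ∈ S ↔ y < a ∨ c ≤ y ∧ y < w₁.length)
    (hx : x = a ∨ x + 1 = c) (h₁ : partner w₁ x ∈ S) (h₂ : partner w₂ x ∈ S)
    (hU : unmatched (partner w₁) S = unmatched (partner w₂) S) :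
    partner w₁ x = partner w₂ x := by
  have hxS : x ∉ S := by rw [hS]; omega
  have hu₁ : partner w₁ x ∈ unmatched (partner w₂) S := by
    rw [← hU, mem_unmatched, partner_involutive hw₁]; exact ⟨h₁, hxS⟩
  have hu₂ : partner w₂ x ∈ unmatched (partner w₁) S := by
    rw [hU, mem_unmatched, partner_involutive hw₂]; exact ⟨h₂, hxS⟩
  rw [mem_unmatched, hS, hS] at hu₁ hu₂
  have hL₁ := partner_lt_length hw₁ (show x < w₁.length by omega)
  have hL₂ := partner_lt_length hw₂ (show x < w₂.length by omega)
  have hp₁ := partner_lt_length hw₂ (show partner w₁ x < w₂.length by omega)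
  have hp₂ := partner_lt_length hw₁ (show partner w₂ x < w₁.length by omega)
  apply cyclicRank_injOn c w₁.length hL₁ (show partner w₂ x < w₁.length by omega)
  rcases hx with rfl | rfl
  · have e₁ := cyclicRank_le_partner_left hw₁ hac hc hu₂.1 (by omega)
    have e₂ := cyclicRank_le_partner_left hw₂ (z := partner w₁ x) hac (by omega) (by omega)
      (by omega)
    rw [← hlen] at e₂
    omega
  · have e₁ := cyclicRank_partner_right_le hw₁ (a := a) (b := x) (z := partner w₂ x)
      (by omega) (by omega) (by omega) (by omega) (by omega)
    have e₂ := cyclicRank_partner_right_le hw₂ (a := a) (b := x) (z := partner w₁ x)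
      (by omega) (by omega) (by omega) (by omega) (by omega)
    rw [← hlen] at e₂
    omega

lemma partner_mem_readSet_iff_of_psiR_eq (hw₁ : IsDyck w₁) (hw₂ : IsDyck w₂)
    (hlen : w₁.length = w₂.length) (hψ : psiR r w₁ = psiR r w₂) {p : ℕ}
    (hp : p < w₁.length) :
    partner w₁ (zigR r w₁.length p) ∈ readSet r w₁.length p ↔
      partner w₂ (zigR r w₁.length p) ∈ readSet r w₁.length p := by
  have := congrArg (·[p]?) hψ
  simp only [psiR_eq_map hw₁, psiR_eq_map hw₂, ← hlen, List.getElem?_map,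
    List.getElem?_range hp, Option.map_some, Option.some.injEq, decide_eq_decide] at this
  exact not_iff_not.1 this

lemma matchingAgreeOn_readSet (hw₁ : IsDyck w₁) (hw₂ : IsDyck w₂)
    (hlen : w₁.length = w₂.length) (hψ : psiR r w₁ = psiR r w₂) {p : ℕ}
    (hp : p ≤ w₁.length) :
    MatchingAgreeOn (partner w₁) (partner w₂) (readSet r w₁.length p) := by
  induction p with
  | zero => simp [MatchingAgreeOn, readSet]
  | succ p ih =>
    have hpL : p < w₁.length := by omega
    set x := zigR r w₁.length p
    have hxL : x < w₁.length := zigR_lt hpL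
    rw [readSet_succ]
    refine (ih hpL.le).insert (partner_involutive hw₁) (partner_involutive hw₂) ?_
      (partner_ne_self hw₁ hxL) (partner_ne_self hw₂ (hlen ▸ hxL))
    have hiff := partner_mem_readSet_iff_of_psiR_eq hw₁ hw₂ hlen hψ hpL
    by_cases h₁ : partner w₁ x ∈ readSet r w₁.length p
    · have heq : partner w₁ x = partner w₂ x := by
        refine partner_eq_of_unmatched_eq hw₁ hw₂ hlen (readLeft_lt_readRight hpL)
          readRight_le (fun y => mem_readSet hpL.le) ?_ h₁ (hiff.1 h₁)
          (ih hpL.le).unmatched_eq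
        rcases zigR_eq_readLeft_or_readRight (r := r) hpL with h | h
        exacts [Or.inl h.1, Or.inr h.1]
      intro y _
      rw [heq]
    · intro y hy
      exact iff_of_false (fun h => h₁ (h ▸ hy)) (fun h => h₁ (hiff.2 (h ▸ hy)))

lemma eq_of_psiR_eq (hw₁ : IsDyck w₁) (hw₂ : IsDyck w₂) (hlen : w₁.length = w₂.length)
    (hψ : psiR r w₁ = psiR r w₂) : w₁ = w₂ := by
  have hagree := matchingAgreeOn_readSet hw₁ hw₂ hlen hψ le_rfl
  rw [readSet_self] at hagree
  apply List.ext_getElem?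
  intro i
  rcases lt_or_ge i w₁.length with hi | hi
  · have hpi : partner w₁ i = partner w₂ i :=
      ((hagree i (mem_range.2 hi) _ (mem_range.2 (partner_lt_length hw₁ hi))).1 rfl).symm
    rw [getElem?_eq_some_decide_lt_partner hw₁ hi,
      getElem?_eq_some_decide_lt_partner hw₂ (hlen ▸ hi), hpi]
  · rw [List.getElem?_eq_none hi, List.getElem?_eq_none (hlen ▸ hi)]

end Injectivity

/-- for every `r ≥ 0`, `Ψ_r` is a bijection from `D_n` to itself,
for every `n ≥ 0`. -/
theorem psiR_bijOn (r n : ℕ) :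
    Set.BijOn (psiR r) {w : List Bool | IsDyck w ∧ w.length = 2 * n}
      {w : List Bool | IsDyck w ∧ w.length = 2 * n} := by
  have hfin : {w : List Bool | IsDyck w ∧ w.length = 2 * n}.Finite :=
    (List.finite_length_eq Bool (2 * n)).subset fun w hw => hw.2
  refine (hfin.injOn_iff_bijOn_of_mapsTo ?_).1 ?_
  · rintro w ⟨hw, hlen⟩
    exact ⟨psiR_isDyck hw, (length_psiR r w).trans hlen⟩
  · rintro w₁ ⟨hw₁, hlen₁⟩ w₂ ⟨hw₂, hlen₂⟩ hψ
    exact eq_of_psiR_eq hw₁ hw₂ (hlen₁.trans hlen₂.symm) hψ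

end DyckBij
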